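/- arXiv:1501.03518 — 2 statements merged into one kernel-verified Lean document; each statement's English description precedes it below -/
import Mathlib

section
/- Let k ≥ 2 and a_1,...,a_k ≥ 1 be fixed natural numbers. Then there exists p_0 such that for every integer p > p_0, the complete multipartite graph K_{p·a_1,...,p·a_k} has an embedded K_{a_1,...,a_k}-decomposition. -/
open SimpleGraph Finset

/-- An embedded `K_{a_1,…,a_k}`-decomposition of `K_{p·a_1,…,p·a_k}`:
there are partitions of each vertex class `V_i = Fin p × Fin (a i)` into `p` cells of size
`a i` (given by a labelling `part i : V_i → Fin p`), and an edge decomposition of the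
complete multipartite graph `K_{p·a_1,…,p·a_k}` into copies of `K_{a_1,…,a_k}` such that,
for each copy, its `i`-th partite class coincides with one of the cells of `V_i`. -/
def HasEmbeddedDecomposition (k p : ℕ) (a : Fin k → ℕ) : Prop :=
  ∃ part : (i : Fin k) → (Fin p × Fin (a i)) → Fin p,
    (∀ i j, {x : Fin p × Fin (a i) | part i x = j}.ncard = a i) ∧
    ∃ (ι : Type) (c : ι → (Σ i : Fin k, Fin (a i)) → (Σ i : Fin k, Fin p × Fin (a i))),
      (∀ t, Function.Injective (c t)) ∧
      (∀ t (i : Fin k) (x : Fin (a i)), (c t ⟨i, x⟩).1 = i) ∧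
      (∀ t (i : Fin k), ∃ j : Fin p,
        {y : Fin p × Fin (a i) | part i y = j} =
          {y : Fin p × Fin (a i) | ∃ x : Fin (a i), c t ⟨i, x⟩ = ⟨i, y⟩}) ∧
      ∀ e ∈ (completeMultipartiteGraph fun i : Fin k => Fin p × Fin (a i)).edgeSet,
        ∃! t : ι, ∃ u v, (completeMultipartiteGraph fun i : Fin k => Fin (a i)).Adj u v ∧
          e = s(c t u, c t v)

/-!
Taking the partition classes of `V_i = Fin p × Fin (a i)` to be the fibres over `Fin p`, an
embedded decomposition is the same as a transversal design `TD(k, p)`: a family of maps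
`Fin k → Fin p` (the blocks) such that any two values in two distinct coordinates are taken by
exactly one block. What is needed is thus the Chowla–Erdős–Straus theorem: `TD(k, n)` exists for
all large `n`.

Affine lines over finite fields give `TD(k, q)` for prime powers `q ≥ k`, and products of designs
give `TD(k, n)` whenever `n` is a product of such prime powers, in particular when `n` has no
prime factor below `k`. Wilson's construction then reaches every large `n`: truncate two groups
of a `TD(k + 2, t)` to sizes `u, w ≤ t`, blow up every point of the other `k` groups into `A`
points, replace each block meeting `s ≤ 2` truncated groups by a `TD(k + 1, A + s)` with `s`
disjoint blocks removed, and fill the truncated groups with `TD(k, u)` and `TD(k, w)`. This gives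
`TD(k, A t + u + w)`. It remains to take `A = L - 1` with `L = ∏_{p < k + 1} p ^ (k + 1)`, so that
`A, A + 1, A + 2` all carry a `TD(k + 1, ·)`; `t ≡ 1` modulo all primes below `k + 2`; and to
split `n - A t` as `u + w` with `u` bounded, by the Chinese remainder theorem.
-/

open Function

section TransversalDesign

variable {κ κ' ι α β : Type}

def IsTransversalDesign (F : ι → κ → α) : Prop :=
  ∀ i j, i ≠ j → ∀ a b, ∃! t, F t i = a ∧ F t j = b

def HasTransversalDesign (K n : ℕ) : Prop :=
  ∃ (ι : Type) (F : ι → Fin K → Fin n), IsTransversalDesign F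

namespace IsTransversalDesign

variable {F : ι → κ → α}

theorem eq_of_eq_of_eq (hF : IsTransversalDesign F) {i j : κ} (hij : i ≠ j) {t t' : ι}
    (hi : F t i = F t' i) (hj : F t j = F t' j) : t = t' :=
  (hF i j hij _ _).unique ⟨hi, hj⟩ ⟨rfl, rfl⟩

theorem of_exists_of_eq (hex : ∀ i j, i ≠ j → ∀ a b, ∃ t, F t i = a ∧ F t j = b)
    (heq : ∀ i j, i ≠ j → ∀ t t', F t i = F t' i → F t j = F t' j → t = t') :
    IsTransversalDesign F := by
  intro i j hij a b
  obtain ⟨t, hti, htj⟩ := hex i j hij a b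
  exact ⟨t, ⟨hti, htj⟩, fun t' ⟨hi, hj⟩ => heq i j hij t' t (hi.trans hti.symm) (hj.trans htj.symm)⟩

theorem comp_embedding (hF : IsTransversalDesign F) (σ : κ' ↪ κ) :
    IsTransversalDesign fun t i => F t (σ i) :=
  fun i j hij => hF (σ i) (σ j) (σ.injective.ne hij)

theorem map_equiv (hF : IsTransversalDesign F) (e : κ → α ≃ β) :
    IsTransversalDesign fun t i => e i (F t i) := by
  intro i j hij a b
  simpa only [← Equiv.eq_symm_apply] using hF i j hij ((e i).symm a) ((e j).symm b)

theorem hasTransversalDesign [Fintype α] {K : ℕ} {F : ι → Fin K → α}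
    (hF : IsTransversalDesign F) : HasTransversalDesign K (Fintype.card α) :=
  ⟨ι, _, hF.map_equiv fun _ => Fintype.equivFin α⟩

end IsTransversalDesign

namespace HasTransversalDesign

variable {K n : ℕ}

theorem exists_of_card_eq (h : HasTransversalDesign K n) [Fintype α]
    (hα : Fintype.card α = n) : ∃ (ι : Type) (F : ι → Fin K → α), IsTransversalDesign F := by
  obtain ⟨ι, F, hF⟩ := h
  exact ⟨ι, _, hF.map_equiv fun _ => (Fintype.equivFinOfCardEq hα).symm⟩

theorem mul {m : ℕ} (hm : HasTransversalDesign K m) (hn : HasTransversalDesign K n) :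
    HasTransversalDesign K (m * n) := by
  obtain ⟨ι, F, hF⟩ := hm
  obtain ⟨ι', F', hF'⟩ := hn
  have hFF' : IsTransversalDesign fun (t : ι × ι') i => (F t.1 i, F' t.2 i) := by
    refine .of_exists_of_eq (fun i j hij a b => ?_) fun i j hij t t' hi hj => ?_
    · obtain ⟨s, hs, -⟩ := hF i j hij a.1 b.1
      obtain ⟨s', hs', -⟩ := hF' i j hij a.2 b.2
      exact ⟨(s, s'), Prod.ext hs.1 hs'.1, Prod.ext hs.2 hs'.2⟩
    · simp only [Prod.mk.injEq] at hi hj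
      exact Prod.ext (hF.eq_of_eq_of_eq hij hi.1 hj.1) (hF'.eq_of_eq_of_eq hij hi.2 hj.2)
  simpa using hFF'.hasTransversalDesign

end HasTransversalDesign

theorem hasTransversalDesign_zero (K : ℕ) : HasTransversalDesign K 0 :=
  ⟨Empty, Empty.elim, fun _ _ _ a => a.elim0⟩

theorem hasTransversalDesign_one (K : ℕ) : HasTransversalDesign K 1 :=
  ⟨Unit, fun _ _ => 0, fun _ _ _ _ _ => ⟨(), ⟨Subsingleton.elim _ _, Subsingleton.elim _ _⟩,
    fun _ _ => rfl⟩⟩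

theorem isTransversalDesign_affine {F : Type} [Field F] {c : κ → F} (hc : Injective c) :
    IsTransversalDesign fun (t : F × F) i => t.1 * c i + t.2 := by
  refine .of_exists_of_eq (fun i j hij a b => ?_) fun i j hij t t' hi hj => ?_
  · have hc : c i - c j ≠ 0 := sub_ne_zero.mpr (hc.ne hij)
    refine ⟨((a - b) / (c i - c j), a - (a - b) / (c i - c j) * c i), by ring, ?_⟩
    field_simp
    ring
  · have hc : c i - c j ≠ 0 := sub_ne_zero.mpr (hc.ne hij)
    have hs : t.1 = t'.1 := by
      apply mul_right_cancel₀ hc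
      linear_combination hi - hj
    exact Prod.ext hs (by rw [hs] at hi; simpa using hi)

theorem hasTransversalDesign_card_of_field (F : Type) [Field F] [Fintype F] {K : ℕ}
    (hK : K ≤ Fintype.card F) : HasTransversalDesign K (Fintype.card F) := by
  let c : Fin K ↪ F := (Fin.castLEEmb hK).trans (Fintype.equivFin F).symm.toEmbedding
  simpa using (isTransversalDesign_affine c.injective).hasTransversalDesign

theorem hasTransversalDesign_prime_pow {K p : ℕ} (hp : p.Prime) (e : ℕ) (hK : K ≤ p ^ e) :
    HasTransversalDesign K (p ^ e) := by
  rcases Nat.eq_zero_or_pos e with rfl | he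
  · exact hasTransversalDesign_one K
  have : Fact p.Prime := ⟨hp⟩
  let _ : Fintype (GaloisField p e) := Fintype.ofFinite _
  have hcard : Fintype.card (GaloisField p e) = p ^ e := by
    rw [← Nat.card_eq_fintype_card, GaloisField.card p e he.ne']
  exact hcard ▸ hasTransversalDesign_card_of_field _ (hcard ▸ hK)

theorem hasTransversalDesign_of_forall_primesBelow_not_dvd {K n : ℕ}
    (h : ∀ p ∈ Nat.primesBelow K, ¬ p ∣ n) : HasTransversalDesign K n := by
  induction n using Nat.recOnMul with
  | zero => exact hasTransversalDesign_zero K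
  | one => exact hasTransversalDesign_one K
  | prime p hp =>
    have hKp : K ≤ p := by
      by_contra! hpK
      exact h p (Nat.mem_primesBelow.mpr ⟨hpK, hp⟩) dvd_rfl
    simpa using hasTransversalDesign_prime_pow hp 1 (by simpa using hKp)
  | mul a b ha hb =>
    exact (ha fun p hp hpa => h p hp (hpa.mul_right b)).mul
      (hb fun p hp hpb => h p hp (hpb.mul_left a))

end TransversalDesign

section Holes

variable {κ ι α ρ τ : Type}

theorem exists_perm_apply_eq [Finite τ] {f g : ρ → τ} (hf : Injective f) (hg : Injective g) :
    ∃ σ : Equiv.Perm τ, ∀ r, σ (f r) = g r := by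
  classical
  refine ⟨((Equiv.ofInjective f hf).symm.trans (Equiv.ofInjective g hg)).extendSubtype,
    fun r => ?_⟩
  rw [Equiv.extendSubtype_apply_of_mem _ _ (Set.mem_range_self r)]
  simp

theorem IsTransversalDesign.exists_constant_blocks [Finite τ] {F : ι → Option κ → τ}
    (hF : IsTransversalDesign F) (c₀ : κ) (z₀ : τ) {f : ρ → τ} (hf : Injective f) :
    ∃ F' : ι → κ → τ, IsTransversalDesign F' ∧ ∀ r, ∃ t, ∀ i, F' t i = f r := by
  -- the blocks through `z₀` in the extra column are pairwise disjoint in the other columns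
  choose D hD using fun r => (hF (some c₀) none (Option.some_ne_none c₀) (f r) z₀).exists
  have hDinj : ∀ i, Injective fun r => F (D r) (some i) := fun i r r' h => by
    have := hF.eq_of_eq_of_eq (Option.some_ne_none i) h ((hD r).2.trans (hD r').2.symm)
    exact hf ((hD r).1.symm.trans (this ▸ (hD r').1))
  choose σ hσ using fun i => exists_perm_apply_eq (hDinj i) hf
  exact ⟨fun t i => σ i (F t (some i)),
    (hF.comp_embedding ⟨some, Option.some_injective κ⟩).map_equiv σ, fun r => ⟨D r, (hσ · r)⟩⟩

/-- `G` covers every pair of points in distinct columns exactly once, except the pairs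
`(inr r, inr r)`, which it does not cover: a transversal design on `α ⊕ ρ` with the constant
blocks at the points of `ρ` deleted. -/
def IsHoledTransversalDesign (G : ι → κ → α ⊕ ρ) : Prop :=
  (∀ i j, i ≠ j → ∀ a b, (∀ r, ¬(a = .inr r ∧ b = .inr r)) → ∃! t, G t i = a ∧ G t j = b) ∧
    ∀ t i j r, i ≠ j → ¬(G t i = .inr r ∧ G t j = .inr r)

namespace IsHoledTransversalDesign

variable {G : ι → κ → α ⊕ ρ}

theorem eq_of_eq_of_eq (hG : IsHoledTransversalDesign G) {i j : κ} (hij : i ≠ j) {t t' : ι}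
    (hi : G t i = G t' i) (hj : G t j = G t' j) : t = t' := by
  refine (hG.1 i j hij _ _ fun r hr => hG.2 t i j r hij ?_).unique ⟨hi, hj⟩ ⟨rfl, rfl⟩
  exact ⟨hi.trans hr.1, hj.trans hr.2⟩

end IsHoledTransversalDesign

theorem IsTransversalDesign.isHoledTransversalDesign {G : ι → κ → α ⊕ ρ}
    (hG : IsTransversalDesign G) (hconst : ∀ r, ∃ t, ∀ i, G t i = .inr r) :
    IsHoledTransversalDesign
      fun t : {t // ∀ i j r, i ≠ j → ¬(G t i = .inr r ∧ G t j = .inr r)} => G t := by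
  refine ⟨fun i j hij a b hab => ?_, fun t => t.2⟩
  obtain ⟨t, ht, htu⟩ := hG i j hij a b
  refine ⟨⟨t, fun i' j' r hij' hr => hab r ?_⟩, ht, fun t' ht' => Subtype.ext (htu t' ht')⟩
  obtain ⟨c, hc⟩ := hconst r
  rw [hG.eq_of_eq_of_eq hij' (hr.1.trans (hc i').symm) (hr.2.trans (hc j').symm), hc, hc] at ht
  exact ⟨ht.1.symm, ht.2.symm⟩

theorem HasTransversalDesign.exists_holed [Fintype ρ] {k A : ℕ} (hk : 0 < k) (hA : 0 < A)
    (h : HasTransversalDesign (k + 1) (A + Fintype.card ρ)) :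
    ∃ (ι : Type) (G : ι → Fin k → Fin A ⊕ ρ), IsHoledTransversalDesign G := by
  obtain ⟨ι, F, hF⟩ := h.exists_of_card_eq (α := Fin A ⊕ ρ) (by simp)
  obtain ⟨G, hG, hconst⟩ := (hF.comp_embedding (finSuccEquiv k).symm.toEmbedding)
    |>.exists_constant_blocks ⟨0, hk⟩ (.inl ⟨0, hA⟩) Sum.inr_injective
  exact ⟨_, _, hG.isHoledTransversalDesign hconst⟩

end Holes

section Wilson

variable {k ℓ A t : ℕ} {u : Fin ℓ → ℕ} {ιM : Type} (M : ιM → Fin k ⊕ Fin ℓ → Fin t)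

/-- The extra groups, truncated to their first `u j` points, that the master block `m` meets. -/
abbrev Hits (u : Fin ℓ → ℕ) (m : ιM) : Type := {j : Fin ℓ // (M m (.inr j) : ℕ) < u j}

def liftPoint (m : ιM) (i : Fin k) : Fin A ⊕ Hits M u m → (Fin t × Fin A) ⊕ Σ j, Fin (u j)
  | .inl a => .inl (M m (.inl i), a)
  | .inr j => .inr ⟨j.1, ⟨M m (.inr j.1), j.2⟩⟩

/-- The point of the master design that lies below the point `P` of the `i`-th group. -/
def masterCoord (hut : ∀ j, u j ≤ t) (i : Fin k) :
    (Fin t × Fin A) ⊕ (Σ j, Fin (u j)) → (Fin k ⊕ Fin ℓ) × Fin t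
  | .inl P => (.inl i, P.1)
  | .inr P => (.inr P.1, Fin.castLE (hut P.1) P.2)

variable {M}

theorem liftPoint_injective (m : ιM) (i : Fin k) :
    Injective (liftPoint (A := A) (u := u) M m i) := by
  rintro (a | ⟨j, hj⟩) (a' | ⟨j', hj'⟩) h <;> simp [liftPoint] at h
  · rw [h]
  · obtain ⟨rfl, -⟩ := h
    rfl

theorem apply_masterCoord_liftPoint (hut : ∀ j, u j ≤ t) (m : ιM) (i : Fin k)
    (x : Fin A ⊕ Hits M u m) :
    M m (masterCoord hut i (liftPoint M m i x)).1 = (masterCoord hut i (liftPoint M m i x)).2 := by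
  rcases x with a | j <;> rfl

theorem exists_liftPoint_eq (hut : ∀ j, u j ≤ t) {m : ιM} {i : Fin k}
    {P : (Fin t × Fin A) ⊕ Σ j, Fin (u j)}
    (h : M m (masterCoord hut i P).1 = (masterCoord hut i P).2) :
    ∃ x, liftPoint M m i x = P := by
  rcases P with ⟨y, a⟩ | ⟨j, c⟩
  · exact ⟨.inl a, by simpa [liftPoint, masterCoord] using h⟩
  · have hc : (M m (.inr j) : ℕ) = c := congrArg Fin.val h
    exact ⟨.inr ⟨j, hc ▸ c.2⟩, by simp [liftPoint, hc]⟩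

theorem masterCoord_liftPoint_ne (hut : ∀ j, u j ≤ t) {m : ιM} {i i' : Fin k} (hii : i ≠ i')
    {x x' : Fin A ⊕ Hits M u m} (hx : ∀ r, ¬(x = .inr r ∧ x' = .inr r)) :
    (masterCoord hut i (liftPoint M m i x)).1 ≠ (masterCoord hut i' (liftPoint M m i' x')).1 := by
  rcases x with a | j <;> rcases x' with a' | j' <;> simp [liftPoint, masterCoord, hii]
  exact fun h => hx j ⟨rfl, by rw [Subtype.ext h]⟩

variable (M) in
/-- Wilson's construction: every master block `m` is replaced by the holed design `G m` on the
`A` copies of its points in the main groups and on the points where it meets the truncated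
extra groups; the pairs inside one extra group are covered by the designs `Gf j`. -/
def wilsonDesign {ιI : ιM → Type} (G : ∀ m, ιI m → Fin k → Fin A ⊕ Hits M u m)
    {ιf : Fin ℓ → Type} (Gf : ∀ j, ιf j → Fin k → Fin (u j)) :
    (Σ m, ιI m) ⊕ (Σ j, ιf j) → Fin k → (Fin t × Fin A) ⊕ Σ j, Fin (u j)
  | .inl ⟨m, g⟩, i => liftPoint M m i (G m g i)
  | .inr ⟨j, h⟩, i => .inr ⟨j, Gf j h i⟩

theorem exists_wilsonDesign_eq (hut : ∀ j, u j ≤ t) (hM : IsTransversalDesign M)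
    {ιI : ιM → Type} {G : ∀ m, ιI m → Fin k → Fin A ⊕ Hits M u m}
    (hG : ∀ m, IsHoledTransversalDesign (G m))
    {ιf : Fin ℓ → Type} {Gf : ∀ j, ιf j → Fin k → Fin (u j)}
    (hGf : ∀ j, IsTransversalDesign (Gf j)) {i i' : Fin k} (hii : i ≠ i')
    (P Q : (Fin t × Fin A) ⊕ Σ j, Fin (u j)) :
    ∃ w, wilsonDesign M G Gf w i = P ∧ wilsonDesign M G Gf w i' = Q := by
  by_cases hc : (masterCoord hut i P).1 = (masterCoord hut i' Q).1
  · rcases P with ⟨y, a⟩ | ⟨j, c⟩ <;> rcases Q with ⟨y', a'⟩ | ⟨j', c'⟩ <;>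
      simp [masterCoord, hii] at hc
    subst hc
    obtain ⟨h, hh⟩ := (hGf j i i' hii c c').exists
    exact ⟨.inr ⟨j, h⟩, by simp [wilsonDesign, hh]⟩
  · obtain ⟨m, hm⟩ := (hM _ _ hc (masterCoord hut i P).2 (masterCoord hut i' Q).2).exists
    obtain ⟨x, rfl⟩ := exists_liftPoint_eq hut hm.1
    obtain ⟨x', rfl⟩ := exists_liftPoint_eq hut hm.2
    have hx : ∀ r, ¬(x = .inr r ∧ x' = .inr r) := fun r hr => by
      rw [hr.1, hr.2] at hc
      exact hc rfl
    obtain ⟨g, hg⟩ := ((hG m).1 i i' hii x x' hx).exists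
    exact ⟨.inl ⟨m, g⟩, by simp [wilsonDesign, hg]⟩

theorem wilsonDesign_eq_of_eq_of_eq (hut : ∀ j, u j ≤ t) (hM : IsTransversalDesign M)
    {ιI : ιM → Type} {G : ∀ m, ιI m → Fin k → Fin A ⊕ Hits M u m}
    (hG : ∀ m, IsHoledTransversalDesign (G m))
    {ιf : Fin ℓ → Type} {Gf : ∀ j, ιf j → Fin k → Fin (u j)}
    (hGf : ∀ j, IsTransversalDesign (Gf j)) {i i' : Fin k} (hii : i ≠ i')
    {w w' : (Σ m, ιI m) ⊕ (Σ j, ιf j)}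
    (hi : wilsonDesign M G Gf w i = wilsonDesign M G Gf w' i)
    (hi' : wilsonDesign M G Gf w i' = wilsonDesign M G Gf w' i') : w = w' := by
  -- a block of a holed design never meets one extra group twice, a filling block always does
  have hmaster : ∀ m g, (masterCoord hut i (wilsonDesign M G Gf (.inl ⟨m, g⟩) i)).1 ≠
      (masterCoord hut i' (wilsonDesign M G Gf (.inl ⟨m, g⟩) i')).1 :=
    fun m g => masterCoord_liftPoint_ne hut hii fun r => (hG m).2 g i i' r hii
  have hfill : ∀ j h, (masterCoord hut i (wilsonDesign M G Gf (.inr ⟨j, h⟩) i)).1 =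
      (masterCoord hut i' (wilsonDesign M G Gf (.inr ⟨j, h⟩) i')).1 := fun _ _ => rfl
  rcases w with ⟨m, g⟩ | ⟨j, h⟩ <;> rcases w' with ⟨m', g'⟩ | ⟨j', h'⟩
  · have e := apply_masterCoord_liftPoint hut m i (G m g i)
    have e' := apply_masterCoord_liftPoint hut m i' (G m g i')
    simp only [wilsonDesign] at hi hi'
    rw [hi] at e
    rw [hi'] at e'
    obtain rfl := hM.eq_of_eq_of_eq (hmaster m' g')
      (e.trans (apply_masterCoord_liftPoint hut m' i _).symm)
      (e'.trans (apply_masterCoord_liftPoint hut m' i' _).symm)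
    obtain rfl := (hG m).eq_of_eq_of_eq hii (liftPoint_injective m i hi)
      (liftPoint_injective m i' hi')
    rfl
  · exact (hmaster m g (by rw [hi, hi']; exact hfill j' h')).elim
  · exact (hmaster m' g' (by rw [← hi, ← hi']; exact hfill j h)).elim
  · simp only [wilsonDesign, Sum.inr.injEq, Sigma.mk.injEq] at hi hi'
    obtain ⟨rfl, hi⟩ := hi
    obtain rfl := (hGf j).eq_of_eq_of_eq hii (eq_of_heq hi) (eq_of_heq hi'.2)
    rfl

theorem isTransversalDesign_wilsonDesign (hut : ∀ j, u j ≤ t) (hM : IsTransversalDesign M)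
    {ιI : ιM → Type} {G : ∀ m, ιI m → Fin k → Fin A ⊕ Hits M u m}
    (hG : ∀ m, IsHoledTransversalDesign (G m))
    {ιf : Fin ℓ → Type} {Gf : ∀ j, ιf j → Fin k → Fin (u j)}
    (hGf : ∀ j, IsTransversalDesign (Gf j)) :
    IsTransversalDesign (wilsonDesign M G Gf) :=
  .of_exists_of_eq (fun _ _ hii => exists_wilsonDesign_eq hut hM hG hGf hii)
    fun _ _ hii _ _ => wilsonDesign_eq_of_eq_of_eq hut hM hG hGf hii

end Wilson

theorem HasTransversalDesign.wilson {k ℓ A t : ℕ} (hk : 0 < k) (hA : 0 < A) {u : Fin ℓ → ℕ}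
    (hut : ∀ j, u j ≤ t) (hM : HasTransversalDesign (k + ℓ) t)
    (hI : ∀ s ≤ ℓ, HasTransversalDesign (k + 1) (A + s))
    (hu : ∀ j, HasTransversalDesign k (u j)) :
    HasTransversalDesign k (A * t + ∑ j, u j) := by
  obtain ⟨ιM, M, hM⟩ := hM.exists_of_card_eq (α := Fin t) (by simp)
  replace hM := hM.comp_embedding finSumFinEquiv.toEmbedding
  choose ιI G hG using fun m =>
    (hI _ ((Fintype.card_subtype_le _).trans_eq (Fintype.card_fin ℓ))).exists_holed
      (ρ := Hits _ u m) hk hA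
  choose ιf Gf hGf using fun j => (hu j).exists_of_card_eq (α := Fin (u j)) (by simp)
  convert (isTransversalDesign_wilsonDesign hut hM hG hGf).hasTransversalDesign using 1
  simp [mul_comm]

theorem exists_hasTransversalDesign_three_consecutive {K : ℕ} (hK : 2 < K) :
    ∃ A, 0 < A ∧ ∀ s ≤ 2, HasTransversalDesign K (A + s) := by
  set L := ∏ p ∈ Nat.primesBelow K, p ^ K
  have hprime : ∀ p ∈ Nat.primesBelow K, p.Prime := fun _ => Nat.prime_of_mem_primesBelow
  have hdvd : ∀ p ∈ Nat.primesBelow K, p ∣ L := fun p hp =>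
    (dvd_pow_self p (by omega)).trans (dvd_prod_of_mem _ hp)
  have hL : 2 ≤ L := by
    have h2 : 2 ∈ Nat.primesBelow K := Nat.mem_primesBelow.mpr ⟨hK, Nat.prime_two⟩
    have hpos : 0 < L := prod_pos fun p hp => pow_pos (hprime p hp).pos K
    calc 2 ≤ 2 ^ K := Nat.le_self_pow (by omega) 2
      _ ≤ L := Nat.le_of_dvd hpos (dvd_prod_of_mem _ h2)
  -- `L` is a product of large prime powers and its neighbours have no prime factor below `K`
  have hTD : HasTransversalDesign K L := prod_induction _ _ (fun _ _ => .mul)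
    (hasTransversalDesign_one K) fun p hp => hasTransversalDesign_prime_pow (hprime p hp) K
      ((Nat.lt_two_pow_self).le.trans (Nat.pow_le_pow_left (hprime p hp).two_le K))
  have hsucc : ∀ n, L = n + 1 ∨ n = L + 1 → HasTransversalDesign K n := by
    refine fun n hn => hasTransversalDesign_of_forall_primesBelow_not_dvd fun p hp hpn => ?_
    have h1 : p ∣ 1 := by
      rcases hn with hn | rfl
      · exact (Nat.dvd_add_right hpn).mp (hn ▸ hdvd p hp)
      · exact (Nat.dvd_add_right (hdvd p hp)).mp hpn
    exact (hprime p hp).one_lt.ne' (Nat.dvd_one.mp h1)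
  refine ⟨L - 1, by omega, fun s hs => ?_⟩
  interval_cases s
  · exact hsucc _ (.inl (by omega))
  · exact (by omega : L = L - 1 + 1) ▸ hTD
  · exact hsucc _ (.inr (by omega))

theorem exists_natCast_ne_zero_mul_ne {p c x : ℕ} [Fact p.Prime]
    (hcx : (c : ZMod p) = 0 → (x : ZMod p) ≠ 0) (h2 : p = 2 → (c : ZMod p) ≠ x) :
    ∃ r : ℕ, (r : ZMod p) ≠ 0 ∧ (c * r : ZMod p) ≠ x := by
  by_cases hc : (c : ZMod p) = x
  · have hp2 : p ≠ 2 := fun hp => h2 hp hc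
    refine ⟨2, ?_, fun h => hcx ?_ (hc ▸ ?_)⟩
    · exact_mod_cast (ZMod.natCast_eq_zero_iff 2 p).not.mpr fun hp =>
        hp2 ((Nat.prime_dvd_prime_iff_eq Fact.out Nat.prime_two).mp hp)
    · linear_combination h - hc
    · linear_combination h - hc
  · exact ⟨1, by simp, by simpa using hc⟩

theorem exists_hasTransversalDesign_lt_prod_primesBelow {k c x : ℕ}
    (hres : ∀ p ∈ Nat.primesBelow k, ∃ r : ℕ, (r : ZMod p) ≠ 0 ∧ (c * r : ZMod p) ≠ x) :
    ∃ v < ∏ p ∈ Nat.primesBelow k, p, HasTransversalDesign k v ∧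
      (c * v ≤ x → HasTransversalDesign k (x - c * v)) := by
  choose! r hr using hres
  have hprime : ∀ p ∈ Nat.primesBelow k, p.Prime := fun _ => Nat.prime_of_mem_primesBelow
  have hne : ∀ p ∈ Nat.primesBelow k, id p ≠ 0 := fun p hp => (hprime p hp).ne_zero
  have hcop : Set.Pairwise (Nat.primesBelow k : Set ℕ) (Nat.Coprime on id) :=
    fun p hp q hq hpq => (Nat.coprime_primes (hprime p hp) (hprime q hq)).mpr hpq
  set v := Nat.chineseRemainderOfFinset r id (Nat.primesBelow k) hne hcop
  have hvr : ∀ p ∈ Nat.primesBelow k, (v : ZMod p) = r p := fun p hp =>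
    (ZMod.natCast_eq_natCast_iff _ _ _).mpr (v.2 p hp)
  refine ⟨v, Nat.chineseRemainderOfFinset_lt_prod r id hne hcop, ?_, fun hcv => ?_⟩
  · refine hasTransversalDesign_of_forall_primesBelow_not_dvd fun p hp hpv => (hr p hp).1 ?_
    rw [← hvr p hp, ZMod.natCast_eq_zero_iff]
    exact hpv
  · refine hasTransversalDesign_of_forall_primesBelow_not_dvd fun p hp hpw => (hr p hp).2 ?_
    have := (ZMod.natCast_eq_zero_iff _ _).mpr hpw
    push_cast [Nat.cast_sub hcv] at this
    rw [← hvr p hp]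
    linear_combination -this

theorem exists_add_eq_hasTransversalDesign (k : ℕ) : ∃ B, ∀ x, B ≤ x → ∃ u w, u + w = x ∧
    u ≤ B ∧ HasTransversalDesign k u ∧ HasTransversalDesign k w := by
  refine ⟨2 ^ k * ∏ p ∈ Nat.primesBelow k, p, fun x hx => ?_⟩
  -- for odd `x` the summand `u` carries the factor `2 ^ k`, so that `x - u` is odd
  set c := if Even x then 1 else 2 ^ k with hc_def
  have hc : c ≤ 2 ^ k ∧ HasTransversalDesign k c := by
    rw [hc_def]
    split_ifs
    · exact ⟨Nat.one_le_two_pow, hasTransversalDesign_one k⟩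
    · exact ⟨le_rfl, hasTransversalDesign_prime_pow Nat.prime_two k Nat.lt_two_pow_self.le⟩
  have hres : ∀ p ∈ Nat.primesBelow k, ∃ r : ℕ, (r : ZMod p) ≠ 0 ∧ (c * r : ZMod p) ≠ x := by
    intro p hp
    obtain ⟨hpk, hp⟩ := Nat.mem_primesBelow.mp hp
    have : Fact p.Prime := ⟨hp⟩
    apply exists_natCast_ne_zero_mul_ne
    · rw [ZMod.natCast_eq_zero_iff, Ne, ZMod.natCast_eq_zero_iff]
      rcases Nat.even_or_odd x with hx2 | hx2
      · simp [c, hx2, hp.ne_one]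
      · intro hpc
        simp only [c, Nat.not_even_iff_odd.mpr hx2, if_false] at hpc
        obtain rfl := (Nat.prime_dvd_prime_iff_eq hp Nat.prime_two).mp (hp.dvd_of_dvd_pow hpc)
        exact fun h2x => Nat.not_even_iff_odd.mpr hx2 (even_iff_two_dvd.mpr h2x)
    · rintro rfl
      rcases Nat.even_or_odd x with hx2 | hx2
      · simp [c, hx2, ZMod.natCast_eq_zero_iff_even.mpr hx2]
      · have h2k : Even (2 ^ k) := (Nat.even_pow' (by omega)).mpr even_two
        simp [c, Nat.not_even_iff_odd.mpr hx2, ZMod.natCast_eq_zero_iff_even.mpr h2k,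
          ZMod.natCast_eq_one_iff_odd.mpr hx2]
  obtain ⟨v, hv, hTDv, hTDw⟩ := exists_hasTransversalDesign_lt_prod_primesBelow hres
  have hcv : c * v ≤ 2 ^ k * ∏ p ∈ Nat.primesBelow k, p := Nat.mul_le_mul hc.1 hv.le
  exact ⟨c * v, x - c * v, by omega, hcv, hc.2.mul hTDv, hTDw (by omega)⟩

theorem exists_hasTransversalDesign_of_le {k : ℕ} (hk : 2 ≤ k) :
    ∃ N, ∀ n, N ≤ n → HasTransversalDesign k n := by
  obtain ⟨A, hA, hI⟩ := exists_hasTransversalDesign_three_consecutive (K := k + 1) (by omega)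
  obtain ⟨B, hB⟩ := exists_add_eq_hasTransversalDesign k
  set P := ∏ p ∈ Nat.primesBelow (k + 2), p
  have hP : 0 < P := prod_pos fun p hp => (Nat.prime_of_mem_primesBelow hp).pos
  have hM : ∀ q, HasTransversalDesign (k + 2) (q * P + 1) := fun q =>
    hasTransversalDesign_of_forall_primesBelow_not_dvd fun p hp hpq =>
      (Nat.prime_of_mem_primesBelow hp).one_lt.ne' (Nat.dvd_one.mp
        ((Nat.dvd_add_right ((dvd_prod_of_mem _ hp).mul_left q)).mp hpq))
  refine ⟨(B + A * P) * (A * P) + B + A, fun n hn => ?_⟩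
  -- choose `q` so that `n - A * (q * P + 1)` lies in `[B, B + A * P)`
  set q := (n - B - A) / (A * P)
  have hq : A * P * q ≤ n - B - A := Nat.mul_div_le _ _
  have hq' : n - B - A < A * P * q + A * P :=
    (mul_add_one (A * P) q) ▸ Nat.lt_mul_div_succ (n - B - A) (by positivity)
  have hqB : B + A * P ≤ q := (Nat.le_div_iff_mul_le (by positivity)).mpr (by omega)
  have hqP : q ≤ q * P := Nat.le_mul_of_pos_right q hP
  have hAt : A * (q * P + 1) = A * P * q + A := by ring
  obtain ⟨u, w, huw, huB, hu, hw⟩ := hB (n - A * (q * P + 1)) (by omega)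
  have hn' : A * (q * P + 1) + ∑ j, ![u, w] j = n := by
    simp only [Fin.sum_univ_two, Matrix.cons_val_zero, Matrix.cons_val_one]
    omega
  exact hn' ▸ HasTransversalDesign.wilson (by omega) hA
    (Fin.forall_fin_two.mpr ⟨by simp; omega, by simp; omega⟩) (hM q) hI
    (Fin.forall_fin_two.mpr ⟨hu, hw⟩)

theorem HasTransversalDesign.hasEmbeddedDecomposition {k p : ℕ} (h : HasTransversalDesign k p)
    (a : Fin k → ℕ) : HasEmbeddedDecomposition k p a := by
  obtain ⟨ι, F, hF⟩ := h
  refine ⟨fun _ x => x.1, fun i j => ?_, ι, fun t x => ⟨x.1, (F t x.1, x.2)⟩, fun t => ?_,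
    fun _ _ _ => rfl, fun t i => ⟨F t i, ?_⟩, fun e he => ?_⟩
  · have : {x : Fin p × Fin (a i) | x.1 = j} = Prod.mk j '' Set.univ := by
      ext ⟨y, z⟩
      simp [eq_comm]
    rw [this, Set.ncard_image_of_injective _ (Prod.mk_right_injective j), Set.ncard_univ,
      Nat.card_eq_fintype_card, Fintype.card_fin]
  · rintro ⟨i, x⟩ ⟨i', x'⟩ h
    simp only [Sigma.mk.injEq] at h
    obtain ⟨rfl, h⟩ := h
    simp_all
  · ext ⟨y, z⟩
    simp [eq_comm]
  · induction e using Sym2.ind with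
    | _ P Q =>
      obtain ⟨i, v⟩ := P
      obtain ⟨i', w⟩ := Q
      have hii : i ≠ i' := he
      obtain ⟨t, ⟨hti, hti'⟩, htu⟩ := hF i i' hii v.1 w.1
      refine ⟨t, ⟨⟨i, v.2⟩, ⟨i', w.2⟩, hii, by simp [hti, hti']⟩, ?_⟩
      rintro t' ⟨⟨j, x⟩, ⟨j', x'⟩, -, hs⟩
      apply htu t'
      rcases Sym2.eq_iff.mp hs with ⟨h, h'⟩ | ⟨h, h'⟩ <;>
      · obtain ⟨rfl, h⟩ := Sigma.mk.inj_iff.mp h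
        obtain ⟨rfl, h'⟩ := Sigma.mk.inj_iff.mp h'
        rw [eq_of_heq h, eq_of_heq h']
        exact ⟨rfl, rfl⟩

theorem embedded_decomposition_exists_for_large_p_general (k : ℕ) (hk : 2 ≤ k)
    (a : Fin k → ℕ) :
    ∃ p₀ : ℕ, ∀ p : ℕ, p₀ < p → HasEmbeddedDecomposition k p a := by
  obtain ⟨N, hN⟩ := exists_hasTransversalDesign_of_le hk
  exact ⟨N, fun p hp => (hN p hp.le).hasEmbeddedDecomposition a⟩

/-- For fixed `k ≥ 2` and `a_1,…,a_k ≥ 1` there is a threshold `p₀` such that for every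
`p > p₀` the complete multipartite graph `K_{p·a_1,…,p·a_k}` has an embedded
`K_{a_1,…,a_k}`-decomposition. -/
theorem embedded_decomposition_exists_for_large_p (k : ℕ) (hk : 2 ≤ k)
    (a : Fin k → ℕ) (ha : ∀ i, 1 ≤ a i) :
    ∃ p₀ : ℕ, ∀ p : ℕ, p₀ < p → HasEmbeddedDecomposition k p a :=
  embedded_decomposition_exists_for_large_p_general k hk a
end

section
/- The maximum number of mutually orthogonal Latin squares of order n tends to infinity as n → ∞; that is, for every positive integer m there exists N such that for all n ≥ N there exist m mutually orthogonal Latin squares of order n. -/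
open SimpleGraph Finset

/-- `L` is a Latin square of order `n`: every symbol occurs exactly once in each row
and exactly once in each column. -/
def IsLatinSquare {n : ℕ} (L : Fin n → Fin n → Fin n) : Prop :=
  (∀ i, Function.Bijective (L i)) ∧ (∀ j, Function.Bijective fun i => L i j)

/-- Two Latin squares of order `n` are orthogonal: the `n²` ordered pairs of entries
`(L i j, M i j)` are pairwise distinct. -/
def AreOrthogonal {n : ℕ} (L M : Fin n → Fin n → Fin n) : Prop :=
  Function.Injective fun q : Fin n × Fin n => (L q.1 q.2, M q.1 q.2)

/-!
Chowla–Erdős–Straus. Work with orthogonal arrays `OA(k, n)` (`k` columns over `n` symbols in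
which any two columns show every ordered pair exactly once); an `OA(m + 2, n)` is the same as
`m` MOLS of order `n`. Finite fields give `OA(k, q)` for prime powers `q ≥ k`, and products of
arrays give `OA(k, n)` whenever every prime-power factor of `n` is at least `k` (MacNeish).
Wilson's construction turns `OA(k + 1, t)`, `OA(k, m)`, `OA(k, m + 1)`, `OA(k, u)` with `u ≤ t`
into `OA(k, m t + u)`. Taking `m + 1 = Q` divisible by `p ^ (k + 1)` for all primes `p ≤ k + 1`,
every large `n` can be written as `m t + u` with `t` free of primes `≤ k + 1` and `u` divisible
by `p ^ k` as soon as it is divisible by a prime `p ≤ k`: choose the residue of `t` modulo `Q`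
prime by prime, and `t` itself in a window of length `Q` below `n / m`.
-/

open Function Filter

variable {R R' ι ι' S S' : Type*}

def IsOrthogonalArray (f : R → ι → S) : Prop :=
  ∀ i j, i ≠ j → Bijective fun r => (f r i, f r j)

def HasOA (k n : ℕ) : Prop :=
  ∃ f : Fin n × Fin n → Fin k → Fin n, IsOrthogonalArray f

namespace IsOrthogonalArray

theorem reindex {f : R → ι → S} (hf : IsOrthogonalArray f) (eR : R' ≃ R) {e : ι' → ι}
    (he : Injective e) (σ : ι' → S ≃ S') :
    IsOrthogonalArray fun r i => σ i (f (eR r) (e i)) :=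
  fun i j hij => ((σ i).prodCongr (σ j)).bijective.comp ((hf _ _ (he.ne hij)).comp eR.bijective)

theorem prod {f : R → ι → S} {g : R' → ι → S'} (hf : IsOrthogonalArray f)
    (hg : IsOrthogonalArray g) : IsOrthogonalArray fun (p : R × R') i => (f p.1 i, g p.2 i) :=
  fun i j hij =>
    (Equiv.prodProdProdComm S S S' S').bijective.comp ((hf i j hij).prodMap (hg i j hij))

theorem card_rows {f : R → ι → S} (hf : IsOrthogonalArray f) {i j : ι} (hij : i ≠ j) :
    Nat.card R = Nat.card S ^ 2 := by
  rw [Nat.card_congr (Equiv.ofBijective _ (hf i j hij)), Nat.card_prod, sq]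

theorem hasOA [Finite S] {k n : ℕ} {f : R → Fin k → S} (hf : IsOrthogonalArray f)
    (hS : Nat.card S = n) : HasOA k n := by
  rcases le_or_gt k 1 with hk | hk
  · have := Fin.subsingleton_iff_le_one.2 hk
    exact ⟨fun p _ => p.1, fun i j hij => absurd (Subsingleton.elim i j) hij⟩
  · let eS := Finite.equivFinOfCardEq hS
    let eR : Fin n × Fin n ≃ R := (eS.prodCongr eS).symm.trans
      (Equiv.ofBijective _ (hf ⟨0, by omega⟩ ⟨1, hk⟩ (by simp [Fin.ext_iff]))).symm
    exact ⟨_, hf.reindex eR injective_id fun _ => eS⟩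

end IsOrthogonalArray

theorem hasOA_of_le_one {k n : ℕ} (hn : n ≤ 1) : HasOA k n := by
  have := Fin.subsingleton_iff_le_one.2 hn
  exact ⟨fun p _ => p.1, fun _ _ _ => bijective_of_subsingleton _⟩

theorem HasOA.mul {k a b : ℕ} (ha : HasOA k a) (hb : HasOA k b) : HasOA k (a * b) := by
  obtain ⟨f, hf⟩ := ha
  obtain ⟨g, hg⟩ := hb
  exact (hf.prod hg).hasOA (by simp)

theorem isOrthogonalArray_affine {F : Type*} [Field F] [Finite F] {x : ι → F}
    (hx : Injective x) : IsOrthogonalArray fun (p : F × F) i => p.1 * x i + p.2 := by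
  intro i j hij
  refine Finite.injective_iff_bijective.mp ?_
  rintro ⟨a, b⟩ ⟨a', b'⟩ h
  simp only [Prod.mk.injEq] at h
  obtain rfl : a = a' := by
    have : (a - a') * (x i - x j) = 0 := by linear_combination h.1 - h.2
    simpa [sub_eq_zero, hx.ne hij] using this
  simpa using h.1

theorem hasOA_of_field {k : ℕ} (F : Type*) [Field F] [Finite F] (hk : k ≤ Nat.card F) :
    HasOA k (Nat.card F) :=
  (isOrthogonalArray_affine
    ((Finite.equivFin F).symm.injective.comp (Fin.castLE_injective hk))).hasOA rfl

theorem hasOA_prime_pow {k p e : ℕ} (hp : p.Prime) (he : e ≠ 0) (hk : k ≤ p ^ e) :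
    HasOA k (p ^ e) := by
  have := Fact.mk hp
  rw [← GaloisField.card p e he] at hk ⊢
  exact hasOA_of_field _ hk

def SmallPrimesFull (k n : ℕ) : Prop :=
  ∀ p, p.Prime → p ≤ k → p ∣ n → p ^ k ∣ n

theorem hasOA_of_smallPrimesFull {k n : ℕ} (h : SmallPrimesFull k n) : HasOA k n := by
  rcases eq_or_ne n 0 with rfl | hn
  · exact hasOA_of_le_one zero_le_one
  rw [← Nat.prod_factorization_pow_eq_self hn]
  refine Finset.prod_induction _ (HasOA k) (fun _ _ => HasOA.mul) (hasOA_of_le_one le_rfl)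
    fun p hpn => ?_
  have he := Finsupp.mem_support_iff.1 hpn
  rw [Nat.support_factorization] at hpn
  have hp := Nat.prime_of_mem_primeFactors hpn
  refine hasOA_prime_pow hp he ?_
  by_cases hpk : p ≤ k
  · have hkv : k ≤ n.factorization p :=
      (hp.pow_dvd_iff_le_factorization hn).1 (h p hp hpk (Nat.dvd_of_mem_primeFactors hpn))
    calc k ≤ 2 ^ k := Nat.lt_two_pow_self.le
      _ ≤ p ^ k := Nat.pow_le_pow_left hp.two_le k
      _ ≤ p ^ n.factorization p := Nat.pow_le_pow_right hp.pos hkv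
  · calc k ≤ p := by omega
      _ ≤ p ^ n.factorization p := Nat.le_self_pow he p

section Wilson

variable {RD RA RB RC M T : Type*}

/-- Wilson's construction. Each row `r` of `D` is blown up into a copy of `A`, or, when its entry
in the extra column `none` lies in the hole set `H`, into a copy of `B` without its constant row
`r₀`, with the symbol `none` of `B` replaced by that hole; `C` fills in the pairs of holes. -/
def wilsonArray (D : RD → Option ι → T) (A : RA → ι → M) (B : RB → ι → Option M) (r₀ : RB)
    (H : Set T) (C : RC → ι → H) :
    ({r // D r none ∉ H} × RA) ⊕ ({r // D r none ∈ H} × {s // s ≠ r₀}) ⊕ RC → ι → (M × T) ⊕ H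
  | .inl (r, s), i => .inl (A s i, D r (some i))
  | .inr (.inl (r, s)), i => (B s i).elim (.inr ⟨D r none, r.2⟩) fun y => .inl (y, D r (some i))
  | .inr (.inr c), i => .inr (C c i)

variable {D : RD → Option ι → T} {A : RA → ι → M} {B : RB → ι → Option M} {r₀ : RB}
  {H : Set T} {C : RC → ι → H}

theorem wilsonArray_surjective (hD : IsOrthogonalArray D) (hA : IsOrthogonalArray A)
    (hB : IsOrthogonalArray B) (hr₀ : ∀ i, B r₀ i = none) (hC : IsOrthogonalArray C) {i j : ι}
    (hij : i ≠ j) :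
    Surjective fun x => (wilsonArray D A B r₀ H C x i, wilsonArray D A B r₀ H C x j) := by
  have hne : ∀ {s i y}, B s i = some y → s ≠ r₀ := fun hs h => by simp [h, hr₀] at hs
  have mixed : ∀ i j, i ≠ j → ∀ y z (h : H), ∃ x, wilsonArray D A B r₀ H C x i = .inl (y, z) ∧
      wilsonArray D A B r₀ H C x j = .inr h := by
    intro i j hij y z h
    obtain ⟨r, hr⟩ := (hD (some i) none (by simp)).2 (z, h)
    obtain ⟨s, hs⟩ := (hB i j hij).2 (some y, none)
    simp only [Prod.mk.injEq] at hr hs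
    exact ⟨.inr (.inl (⟨r, hr.2 ▸ h.2⟩, ⟨s, hne hs.1⟩)), by simp [wilsonArray, hr, hs]⟩
  rintro ⟨⟨y, z⟩ | h, ⟨y', z'⟩ | h'⟩
  · obtain ⟨r, hr⟩ := (hD (some i) (some j) (by simpa)).2 (z, z')
    simp only [Prod.mk.injEq] at hr
    by_cases hrH : D r none ∈ H
    · obtain ⟨s, hs⟩ := (hB i j hij).2 (some y, some y')
      simp only [Prod.mk.injEq] at hs
      exact ⟨.inr (.inl (⟨r, hrH⟩, ⟨s, hne hs.1⟩)), by simp [wilsonArray, hr, hs]⟩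
    · obtain ⟨s, hs⟩ := (hA i j hij).2 (y, y')
      simp only [Prod.mk.injEq] at hs
      exact ⟨.inl (⟨r, hrH⟩, s), by simp [wilsonArray, hr, hs]⟩
  · obtain ⟨x, hxi, hxj⟩ := mixed i j hij y z h'
    exact ⟨x, Prod.ext hxi hxj⟩
  · obtain ⟨x, hxj, hxi⟩ := mixed j i hij.symm y' z' h
    exact ⟨x, Prod.ext hxi hxj⟩
  · obtain ⟨c, hc⟩ := (hC i j hij).2 (h, h')
    exact ⟨.inr (.inr c), by simpa [wilsonArray] using hc⟩

variable [Finite RD] [Finite RA] [Finite RB] [Finite RC] [Finite M] [Finite T]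

theorem card_wilsonArray_rows (hD : IsOrthogonalArray D) (hA : IsOrthogonalArray A)
    (hB : IsOrthogonalArray B) (hC : IsOrthogonalArray C) {i j : ι} (hij : i ≠ j) :
    Nat.card (({r // D r none ∉ H} × RA) ⊕ ({r // D r none ∈ H} × {s // s ≠ r₀}) ⊕ RC) =
      Nat.card ((M × T) ⊕ H) ^ 2 := by
  classical
  have hin : Nat.card {r // D r none ∈ H} = Nat.card H * Nat.card T := by
    rw [← Nat.card_prod]
    exact Nat.card_congr (((Equiv.ofBijective _ (hD none (some i) (by simp))).subtypeEquiv
      fun _ => Iff.rfl).trans Equiv.prodSubtypeFstEquivSubtypeProd)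
  have hsplit : Nat.card {r // D r none ∉ H} + Nat.card {r // D r none ∈ H} = Nat.card RD := by
    rw [add_comm, ← Nat.card_sum]
    exact Nat.card_congr (Equiv.sumCompl _)
  have hB' : Nat.card {s // s ≠ r₀} + 1 = Nat.card RB := by
    rw [← Finite.card_option]
    exact Nat.card_congr (Equiv.optionSubtypeNe r₀)
  rw [hD.card_rows (Option.some_ne_none i), hin] at hsplit
  rw [hB.card_rows hij, Finite.card_option] at hB'
  simp only [Nat.card_sum, Nat.card_prod, hA.card_rows hij, hC.card_rows hij, hin]
  linear_combination Nat.card M ^ 2 * hsplit + Nat.card H * Nat.card T * hB'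

theorem isOrthogonalArray_wilsonArray (hD : IsOrthogonalArray D) (hA : IsOrthogonalArray A)
    (hB : IsOrthogonalArray B) (hr₀ : ∀ i, B r₀ i = none) (hC : IsOrthogonalArray C) :
    IsOrthogonalArray (wilsonArray D A B r₀ H C) :=
  fun _ _ hij => (wilsonArray_surjective hD hA hB hr₀ hC hij).bijective_of_nat_card_le
    (by rw [card_wilsonArray_rows hD hA hB hC hij, Nat.card_prod, sq])

end Wilson

theorem hasOA_wilson {k m t u : ℕ} (hut : u ≤ t) (hD : HasOA (k + 1) t) (hA : HasOA k m)
    (hB : HasOA k (m + 1)) (hC : HasOA k u) : HasOA k (m * t + u) := by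
  obtain ⟨d, hd⟩ := hD
  obtain ⟨a, ha⟩ := hA
  obtain ⟨b, hb⟩ := hB
  obtain ⟨c, hc⟩ := hC
  let eH : Fin u ≃ Set.range (Fin.castLE hut) := Equiv.ofInjective _ (Fin.castLE_injective hut)
  have hD' := hd.reindex (Equiv.refl _) finSuccEquivLast.symm.injective fun _ => Equiv.refl _
  have hB' := hb.reindex (Equiv.refl _) injective_id
    fun i => (Equiv.swap (b (0, 0) i) (Fin.last m)).trans finSuccEquivLast
  have hC' := hc.reindex (Equiv.refl _) injective_id fun _ => eH
  refine (isOrthogonalArray_wilsonArray hD' ha hB' (r₀ := (0, 0)) (fun i => ?_) hC').hasOA ?_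
  · simp
  · rw [Nat.card_sum, Nat.card_prod, ← Nat.card_congr eH]
    simp

theorem HasOA.exists_mols {m n : ℕ} (h : HasOA (m + 2) n) :
    ∃ L : Fin m → Fin n → Fin n → Fin n,
      (∀ t, IsLatinSquare (L t)) ∧ ∀ t t' : Fin m, t ≠ t' → AreOrthogonal (L t) (L t') := by
  obtain ⟨f, hf⟩ := h
  let E := Equiv.ofBijective _ (hf 0 1 (by simp))
  have hE0 : ∀ p, f (E.symm p) 0 = p.1 := fun p => congrArg Prod.fst (E.apply_symm_apply p)
  have hE1 : ∀ p, f (E.symm p) 1 = p.2 := fun p => congrArg Prod.snd (E.apply_symm_apply p)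
  have hcol : ∀ t : Fin m, t.addNat 2 ≠ 0 ∧ t.addNat 2 ≠ 1 := fun t => by simp [Fin.ext_iff]
  refine ⟨fun t i j => f (E.symm (i, j)) (t.addNat 2), fun t => ⟨fun i => ?_, fun j => ?_⟩,
    fun t t' htt' => (hf _ _ ?_).injective.comp E.symm.injective⟩
  · refine Finite.injective_iff_bijective.mp fun j j' hjj' => ?_
    have := (hf 0 (t.addNat 2) (hcol t).1.symm).injective (a₁ := E.symm (i, j))
      (a₂ := E.symm (i, j')) (by simp [hE0, hjj'])
    simpa using E.symm.injective this
  · refine Finite.injective_iff_bijective.mp fun i i' hii' => ?_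
    have := (hf 1 (t.addNat 2) (hcol t).2.symm).injective (a₁ := E.symm (i, j))
      (a₂ := E.symm (i', j)) (by simp [hE1, hii'])
    simpa using E.symm.injective this
  · simpa [Fin.ext_iff] using htt'

theorem smallPrimesFull_sub_one {k Q : ℕ} (hQ : ∀ p, p.Prime → p ≤ k → p ∣ Q) :
    SmallPrimesFull k (Q - 1) := by
  intro p hp hpk hpQ
  rcases Q.eq_zero_or_pos with rfl | hQ0
  · simp
  have : p ∣ Q - (Q - 1) := Nat.dvd_sub (hQ p hp hpk) hpQ
  rw [Nat.sub_sub_self hQ0] at this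
  exact absurd this hp.not_dvd_one

/-- `a ≡ c - n` modulo every `p ^ k` with `p ≤ k`, where `c` is the product of the `p ^ k` over
the primes `p ≤ k` not dividing `n`. -/
theorem exists_residue_avoiding_small_primes (k n : ℕ) :
    ∃ a, ∀ p, p.Prime → p ≤ k → ¬ p ∣ a ∧ (p ∣ n + a → p ^ k ∣ n + a) := by
  let c := ∏ p ∈ (k + 1).primesBelow with ¬ p ∣ n, p ^ k
  obtain ⟨L, hL⟩ : ∃ L, k.factorial ^ k = L + 1 :=
    Nat.exists_eq_add_one.2 (pow_pos (Nat.factorial_pos k) k)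
  refine ⟨c + L * n, fun p hp hpk => ?_⟩
  have hsum : n + (c + L * n) = c + k.factorial ^ k * n := by rw [hL]; ring
  by_cases hpn : p ∣ n
  · have hpc : ¬ p ∣ c := fun hpc => by
      obtain ⟨q, hq, hpq⟩ := (Prime.dvd_finsetProd_iff hp.prime _).1 hpc
      simp only [Finset.mem_filter, Nat.mem_primesBelow] at hq
      rw [(Nat.prime_dvd_prime_iff_eq hp hq.1.2).1 (hp.dvd_of_dvd_pow hpq)] at hpn
      exact hq.2 hpn
    have hpa : ¬ p ∣ c + L * n := fun h => hpc ((Nat.dvd_add_left (hpn.mul_left L)).1 h)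
    refine ⟨hpa, fun h => absurd ?_ hpc⟩
    rw [hsum] at h
    exact (Nat.dvd_add_left (hpn.mul_left _)).1 h
  · have hpc : p ^ k ∣ c := Finset.dvd_prod_of_mem _ (by
      simp only [Finset.mem_filter, Nat.mem_primesBelow]
      exact ⟨⟨by omega, hp⟩, hpn⟩)
    have hpL : p ^ k ∣ k.factorial ^ k := pow_dvd_pow_of_dvd (Nat.dvd_factorial hp.pos hpk) k
    have hdvd : p ^ k ∣ n + (c + L * n) := hsum ▸ dvd_add hpc (hpL.mul_right n)
    refine ⟨fun ha => hpn ((Nat.dvd_add_left ha).1 ?_), fun _ => hdvd⟩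
    exact (dvd_pow_self p (by have := hp.two_le; omega)).trans hdvd

theorem Nat.exists_modEq_le_lt_add {Q B : ℕ} (a : ℕ) (hQ : 0 < Q) (hQB : Q ≤ B) :
    ∃ t, t ≡ a [MOD Q] ∧ t ≤ B ∧ B < t + Q := by
  have hr : a % Q < Q := Nat.mod_lt a hQ
  refine ⟨a % Q + Q * ((B - a % Q) / Q), ?_, ?_, ?_⟩
  · simp [Nat.ModEq, Nat.add_mul_mod_self_left]
  · have := Nat.mul_div_le (B - a % Q) Q
    omega
  · have := Nat.lt_mul_div_succ (B - a % Q) hQ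
    rw [Nat.mul_add_one] at this
    omega

theorem exists_wilson_decomposition {k n Q : ℕ} (hQ2 : 2 ≤ Q)
    (hQ : ∀ p, p.Prime → p ≤ k + 1 → p ^ (k + 1) ∣ Q) (hn : Q ^ 4 ≤ n) :
    ∃ t u, n = (Q - 1) * t + u ∧ u ≤ t ∧ SmallPrimesFull (k + 1) t ∧ SmallPrimesFull k u := by
  obtain ⟨a, ha⟩ := exists_residue_avoiding_small_primes (k + 1) n
  obtain ⟨m, rfl⟩ : ∃ m, Q = m + 1 := Nat.exists_eq_add_one.2 (by omega)
  rw [Nat.add_sub_cancel]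
  have hm : 0 < m := by omega
  have hB : (m + 1) ^ 2 + (m + 1) ≤ n / m := by
    rw [Nat.le_div_iff_mul_le hm]
    nlinarith
  obtain ⟨t, hta, htB, hBt⟩ :=
    Nat.exists_modEq_le_lt_add (Q := m + 1) (B := n / m) a (by omega) (by nlinarith)
  have hmt : m * t ≤ n := (Nat.mul_le_mul_left m htB).trans (Nat.mul_div_le n m)
  have hu : n - m * t ≡ n + a [MOD m + 1] := by
    have : n - m * t + (m + 1) * t = n + t := by rw [add_mul, one_mul]; omega
    calc n - m * t ≡ n - m * t + (m + 1) * t [MOD m + 1] := by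
          simp [Nat.ModEq, Nat.add_mul_mod_self_left]
      _ = n + t := this
      _ ≡ n + a [MOD m + 1] := hta.add_left n
  refine ⟨t, n - m * t, by omega, ?_, fun p hp hpk hpt => ?_, fun p hp hpk hpu => ?_⟩
  · have h1 := Nat.lt_mul_div_succ n hm
    have h2 : m * (n / m + 1) ≤ m * t + m * (m + 1) := by
      rw [← Nat.mul_add]; exact Nat.mul_le_mul_left m (by omega)
    have h3 : m * (m + 1) ≤ (m + 1) ^ 2 := by nlinarith
    omega
  · have hpQ := (dvd_pow_self p (Nat.succ_ne_zero k)).trans (hQ p hp hpk)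
    exact absurd ((hta.dvd_iff hpQ).1 hpt) (ha p hp hpk).1
  · have hpQ := hQ p hp (by omega)
    have hp_dvd := (hu.dvd_iff ((dvd_pow_self p (Nat.succ_ne_zero k)).trans hpQ)).1 hpu
    exact (pow_dvd_pow p k.le_succ).trans ((hu.dvd_iff hpQ).2 ((ha p hp (by omega)).2 hp_dvd))

theorem eventually_hasOA (k : ℕ) : ∀ᶠ n in atTop, HasOA k n := by
  let Q := (k + 2).factorial ^ (k + 1)
  have hQ : ∀ p, p.Prime → p ≤ k + 1 → p ^ (k + 1) ∣ Q := fun p hp hpk =>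
    pow_dvd_pow_of_dvd (Nat.dvd_factorial hp.pos (by omega)) _
  have hQ2 : 2 ≤ Q :=
    ((Nat.self_le_factorial (k + 2)).trans (Nat.le_self_pow k.succ_ne_zero _)).trans' (by omega)
  filter_upwards [eventually_ge_atTop (Q ^ 4)] with n hn
  obtain ⟨t, u, rfl, hut, ht, hu⟩ := exists_wilson_decomposition hQ2 hQ hn
  have hm : HasOA k (Q - 1) := hasOA_of_smallPrimesFull (smallPrimesFull_sub_one
    fun p hp hpk => (dvd_pow_self p k.succ_ne_zero).trans (hQ p hp (by omega)))
  have hm1 : HasOA k (Q - 1 + 1) := by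
    rw [Nat.sub_add_cancel (by omega)]
    exact hasOA_of_smallPrimesFull fun p hp hpk _ =>
      (pow_dvd_pow p k.le_succ).trans (hQ p hp (by omega))
  exact hasOA_wilson hut (hasOA_of_smallPrimesFull ht) hm hm1 (hasOA_of_smallPrimesFull hu)

/-- The maximum number of mutually orthogonal Latin squares of order `n` tends to infinity:
for every `m` there is `N` such that for all `n ≥ N` there exist `m` mutually orthogonal
Latin squares of order `n`. -/
theorem MOLS_tendsto_atTop (m : ℕ) :
    ∃ N : ℕ, ∀ n : ℕ, N ≤ n →
      ∃ L : Fin m → Fin n → Fin n → Fin n,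
        (∀ t, IsLatinSquare (L t)) ∧
        ∀ t t' : Fin m, t ≠ t' → AreOrthogonal (L t) (L t') := by
  obtain ⟨N, hN⟩ := eventually_atTop.1 (eventually_hasOA (m + 2))
  exact ⟨N, fun n hn => (hN n hn).exists_mols⟩
end
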